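/- Let $m = 2$ and $\boldsymbol\pi = \boldsymbol\pi_{\lambda,a}\boldsymbol\pi_{\mu,-a} \in \mathcal{P}$ with $\lambda, \mu \in P^+$. Then $\mathbf{r}^{-1}(\mathbf{r}(\boldsymbol\pi)) = \{ \boldsymbol\pi_{\lambda + \eta, a}\,\boldsymbol\pi_{\mu - \sigma(\eta), -a} : \eta \in (P^+ - \lambda) \cap (P^- + \sigma(\mu)) \}$. -/

import Mathlib

/-!
Write `wtAt f c i` for the multiplicity of the spectral parameter `c` in `f ∈ 𝒫` at the node `i`.
For `m = 2` the multiplicity of `c` in `𝐫(f)` at a free orbit `{i, σ i}` is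
`wtAt f c i + wtAt f (-c) (σ i)`, and at a fixed node `i` the multiplicity of `c²` is
`wtAt f c i + wtAt f (-c) i`. As an element of `𝒫` is determined by its root multiplicities,
`𝐫(f) = 𝐫(g)` exactly when these folded weights agree. For `g = 𝛑_{λ,a} 𝛑_{μ,-a}` they vanish away
from `±a`, which forces `f = 𝛑_{ν,a} 𝛑_{κ,-a}` with `ν + σ(κ) = λ + σ(μ)`; putting `ν = λ + η`
gives `κ = μ - σ(η)`, and `ν, κ ∈ P⁺` are the two constraints on `η`.
-/

open Polynomial

noncomputable section

variable {I I₀ : Type*}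

/-- The weight of 𝛑 ∈ 𝒫 at the spectral parameter `a`. -/
def wtAt (f : I → Polynomial ℂ) (a : ℂ) : I → ℕ := fun i => (f i).rootMultiplicity a⁻¹

/-- 𝛑_{λ,a} = ((1 - a u)^{λ(hᵢ)})ᵢ ∈ 𝒫, for a dominant weight λ. -/
def piLam (lam : I → ℕ) (a : ℂ) : I → Polynomial ℂ := fun i => (1 - C a * X) ^ lam i

/-- 𝛑_{λ,a} for a weight λ given in integer coordinates (dominance is imposed as a
hypothesis where relevant). -/
def piLamZ (v : I → ℤ) (a : ℂ) : I → Polynomial ℂ := fun i => (1 - C a * X) ^ (v i).toNat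

/-- The action of the diagram automorphism σ on weights, σ(Σ nᵢ ωᵢ) = Σ nᵢ ω_{σ(i)},
i.e. (σ·v)(j) = v(σ⁻¹ j). -/
def sw (σ : Equiv.Perm I) (v : I → ℤ) : I → ℤ := fun i => v (σ.symm i)

/-- The embedding P⁺_σ ⊆ P⁺: a dominant weight of 𝔤₀, given by its coordinates on
the orbit representatives ι : I₀ → I, regarded as a dominant weight of 𝔤 (zero on
the remaining nodes). -/
def embwt (ι : I₀ → I) (lam : I₀ → ℕ) : I → ℤ :=
  Function.extend ι (fun j => (lam j : ℤ)) (fun _ => 0)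

open scoped Classical in
/-- The folded components λ(ε) ∈ P⁺_σ of a dominant weight λ ∈ P⁺. -/
def lamComp (σ : Equiv.Perm I) (ι : I₀ → I) (lam : I → ℕ) (ε : ℕ) : I₀ → ℕ :=
  fun j => if ε ≠ 0 ∧ σ (ι j) = ι j then 0 else lam ((σ ^ ε) (ι j))

open scoped Classical in
/-- The folding map 𝐫 : 𝒫 → 𝒫^σ, 𝐫(∏ₖ 𝛑_{λₖ,aₖ}) = ∏ₖ∏_ε 𝛑^σ_{λₖ(ε), ζ^ε aₖ}; at a
node fixed by σ the spectral parameter is raised to the m-th power. -/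
def fold [Fintype I] (m : ℕ) (ζ : ℂ) (σ : Equiv.Perm I) (ι : I₀ → I)
    (f : I → Polynomial ℂ) : I₀ → Polynomial ℂ :=
  fun j =>
    ∏ a ∈ ((∏ i, f i).roots.toFinset.image fun r => r⁻¹),
      ∏ ε ∈ Finset.range m,
        (1 - C ((ζ ^ ε * a) ^ (if σ (ι j) = ι j then m else 1)) * X) ^
          lamComp σ ι (wtAt f a) ε j

open scoped Classical in
/-- 𝛑^σ_{κ,b} ∈ 𝒫^σ for κ ∈ P⁺_σ: the component at the node j is
(1 - b^{(α_j,α_j)} u)^{κ(j)}, with (α_j,α_j) = m at nodes fixed by σ and 1 on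
full orbits. -/
def piSig (m : ℕ) (σ : Equiv.Perm I) (ι : I₀ → I) (κ : I₀ → ℕ) (b : ℂ) :
    I₀ → Polynomial ℂ :=
  fun j => (1 - C (b ^ (if σ (ι j) = ι j then m else 1)) * X) ^ κ j

/-- The spectral character χ_𝛑 : ℂˣ → P/Q of 𝛑 ∈ 𝒫. -/
def chars (Q : AddSubgroup (I → ℤ)) (f : I → Polynomial ℂ) :
    ℂ → (I → ℤ) ⧸ Q :=
  fun a => QuotientAddGroup.mk (fun i => ((f i).rootMultiplicity a⁻¹ : ℤ))

namespace Polynomial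

variable {K : Type*} [Field K]

theorem one_sub_C_mul_X_ne_zero (β : K) : (1 - C β * X : K[X]) ≠ 0 := fun h => by
  simpa using congrArg (coeff · 0) h

theorem rootMultiplicity_one_sub_C_mul_X_pow [DecidableEq K] {x : K} (hx : x ≠ 0) (β : K)
    (k : ℕ) :
    rootMultiplicity x ((1 - C β * X) ^ k) = if β = x⁻¹ then k else 0 := by
  by_cases hβ : β = 0
  · simp [hβ, Ne.symm (inv_ne_zero hx)]
  have hlin : (1 - C β * X : K[X]) = C (-β) * (X - C β⁻¹) := by
    rw [mul_sub, ← C_mul, neg_mul, mul_inv_cancel₀ hβ]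
    simp only [map_neg, map_one]; ring
  rw [← count_roots, roots_pow, hlin, roots_C_mul _ (neg_ne_zero.2 hβ), roots_X_sub_C,
    Multiset.count_nsmul, Multiset.count_singleton]
  simp only [mul_ite, mul_one, mul_zero, eq_comm.trans inv_eq_iff_eq_inv]

theorem rootMultiplicity_prod {ι : Type*} (s : Finset ι) (p : ι → K[X])
    (hp : ∀ t ∈ s, p t ≠ 0) (x : K) :
    rootMultiplicity x (∏ t ∈ s, p t) = ∑ t ∈ s, rootMultiplicity x (p t) := by
  classical
  rw [← count_roots, roots_prod _ _ (Finset.prod_ne_zero_iff.2 hp), Multiset.count_bind]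
  simp [count_roots]

theorem eq_of_rootMultiplicity_eq_of_coeff_zero_eq_one [IsAlgClosed K] {p q : K[X]}
    (hp : p.coeff 0 = 1) (hq : q.coeff 0 = 1)
    (h : ∀ x ≠ 0, rootMultiplicity x p = rootMultiplicity x q) : p = q := by
  classical
  have hp0 : p ≠ 0 := by rintro rfl; simp at hp
  have hq0 : q ≠ 0 := by rintro rfl; simp at hq
  have hroots : p.roots = q.roots := by
    refine Multiset.ext.2 fun x => ?_
    rcases eq_or_ne x 0 with rfl | hx
    · rw [Multiset.count_eq_zero.2, Multiset.count_eq_zero.2] <;>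
        simp [← coeff_zero_eq_eval_zero, hp, hq, hp0, hq0]
    · rw [count_roots, count_roots, h x hx]
  obtain ⟨u, rfl⟩ := associated_of_dvd_dvd
    ((IsAlgClosed.splits p).dvd_of_roots_le_roots hp0 hroots.le)
    ((IsAlgClosed.splits q).dvd_of_roots_le_roots hq0 hroots.ge)
  have hu : (u : K[X]) = C ((u : K[X]).coeff 0) := eq_C_of_natDegree_eq_zero (natDegree_coe_units u)
  rw [mul_coeff_zero, hp, one_mul] at hq
  rw [hu, hq, C_1, mul_one]

end Polynomial

section Weights

variable {f g : I → ℂ[X]}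

theorem eq_of_wtAt_eq (hf : ∀ i, (f i).coeff 0 = 1) (hg : ∀ i, (g i).coeff 0 = 1)
    (h : ∀ c ≠ 0, ∀ i, wtAt f c i = wtAt g c i) : f = g :=
  funext fun i => eq_of_rootMultiplicity_eq_of_coeff_zero_eq_one (hf i) (hg i) fun x hx => by
    simpa [wtAt] using h x⁻¹ (inv_ne_zero hx) i

theorem piLamZ_eq_piLam (v : I → ℤ) (a : ℂ) : piLamZ v a = piLam (fun i => (v i).toNat) a := rfl

theorem coeff_zero_piLam_mul_piLam (n m : I → ℕ) (a b : ℂ) (i : I) :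
    ((piLam n a * piLam m b) i).coeff 0 = 1 := by
  simp [piLam, coeff_zero_eq_eval_zero]

theorem wtAt_piLam_mul_piLam (n m : I → ℕ) (a b : ℂ) {c : ℂ} (hc : c ≠ 0) (i : I) :
    wtAt (piLam n a * piLam m b) c i = (if c = a then n i else 0) + (if c = b then m i else 0) := by
  rw [wtAt, Pi.mul_apply, piLam, piLam, rootMultiplicity_mul (mul_ne_zero
      (pow_ne_zero _ (one_sub_C_mul_X_ne_zero a)) (pow_ne_zero _ (one_sub_C_mul_X_ne_zero b))),
    rootMultiplicity_one_sub_C_mul_X_pow (inv_ne_zero hc),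
    rootMultiplicity_one_sub_C_mul_X_pow (inv_ne_zero hc), inv_inv]
  simp only [eq_comm (a := a), eq_comm (a := b)]

theorem eq_piLam_mul_piLam_of_wtAt_eq_zero (hf : ∀ i, (f i).coeff 0 = 1) {a b : ℂ} (hab : a ≠ b)
    (h : ∀ c ≠ 0, c ≠ a → c ≠ b → ∀ i, wtAt f c i = 0) :
    f = piLam (wtAt f a) a * piLam (wtAt f b) b := by
  refine eq_of_wtAt_eq hf (coeff_zero_piLam_mul_piLam _ _ _ _) fun c hc i => ?_
  rw [wtAt_piLam_mul_piLam _ _ _ _ hc]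
  rcases eq_or_ne c a with rfl | hca
  · simp [hab]
  rcases eq_or_ne c b with rfl | hcb
  · simp [hca]
  simp [hca, hcb, h c hc hca hcb i]

def foldedWt (σ : Equiv.Perm I) (f : I → ℂ[X]) (c : ℂ) (i : I) : ℕ :=
  wtAt f c i + wtAt f (-c) (σ i)

theorem foldedWt_piLam_mul_piLam (σ : Equiv.Perm I) (n m : I → ℕ) {a c : ℂ} (ha : a ≠ 0)
    (hc : c ≠ 0) (i : I) :
    foldedWt σ (piLam n a * piLam m (-a)) c i =
      (if c = a then n i + m (σ i) else 0) + (if c = -a then m i + n (σ i) else 0) := by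
  have ha' : a ≠ -a := fun h => ha (self_eq_neg.1 h)
  rw [foldedWt, wtAt_piLam_mul_piLam _ _ _ _ hc, wtAt_piLam_mul_piLam _ _ _ _ (neg_ne_zero.2 hc)]
  rcases eq_or_ne c a with rfl | hca
  · simp [ha', ha'.symm]
  rcases eq_or_ne c (-a) with rfl | hcna
  · simp [ha', ha'.symm, add_comm]
  simp [hca, hcna, neg_eq_iff_eq_neg]

end Weights

section Fold

open scoped Classical

variable [Fintype I] {f g : I → ℂ[X]}

theorem mem_image_inv_roots_prod_of_wtAt_ne_zero (hf : ∀ i, (f i).coeff 0 = 1) {b : ℂ} {i : I}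
    (hb : wtAt f b i ≠ 0) : b ∈ (∏ i, f i).roots.toFinset.image (·⁻¹) := by
  have hf0 : ∀ i, f i ≠ 0 := fun i h => by simpa [h] using hf i
  refine Finset.mem_image.2 ⟨b⁻¹, Multiset.mem_toFinset.2 ?_, inv_inv b⟩
  refine Multiset.mem_of_le (roots.le_of_dvd (Finset.prod_ne_zero_iff.2 fun i _ => hf0 i)
    (Finset.dvd_prod_of_mem f (Finset.mem_univ i))) ?_
  rwa [← Multiset.count_ne_zero, count_roots]

theorem sum_ite_eq_wtAt (hf : ∀ i, (f i).coeff 0 = 1) (c : ℂ) (i : I) :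
    ∑ b ∈ (∏ i, f i).roots.toFinset.image (·⁻¹), (if b = c then wtAt f b i else 0) =
      wtAt f c i := by
  rw [Finset.sum_ite_eq']
  split_ifs with hc
  · rfl
  · by_contra h
    exact hc (mem_image_inv_roots_prod_of_wtAt_ne_zero hf (Ne.symm h))

theorem rootMultiplicity_fold (m : ℕ) (ζ : ℂ) (σ : Equiv.Perm I) (ι : I₀ → I) (f : I → ℂ[X])
    (j : I₀) {x : ℂ} (hx : x ≠ 0) :
    rootMultiplicity x (fold m ζ σ ι f j) =
      ∑ b ∈ (∏ i, f i).roots.toFinset.image (·⁻¹), ∑ ε ∈ Finset.range m,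
        if (ζ ^ ε * b) ^ (if σ (ι j) = ι j then m else 1) = x⁻¹
        then lamComp σ ι (wtAt f b) ε j else 0 := by
  have hne : ∀ β : ℂ, ∀ k, (1 - C β * X) ^ k ≠ 0 := fun β k =>
    pow_ne_zero k (one_sub_C_mul_X_ne_zero β)
  rw [fold, rootMultiplicity_prod _ _ fun b _ => Finset.prod_ne_zero_iff.2 fun ε _ => hne _ _]
  simp only [rootMultiplicity_prod _ _ fun ε _ => hne _ _, rootMultiplicity_one_sub_C_mul_X_pow hx]

theorem coeff_zero_fold (m : ℕ) (ζ : ℂ) (σ : Equiv.Perm I) (ι : I₀ → I) (f : I → ℂ[X]) (j : I₀) :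
    (fold m ζ σ ι f j).coeff 0 = 1 := by
  simp [fold, coeff_zero_eq_eval_zero, eval_prod]

variable (σ : Equiv.Perm I) (ι : I₀ → I) {j : I₀}

theorem rootMultiplicity_fold_of_ne (hf : ∀ i, (f i).coeff 0 = 1) (hj : σ (ι j) ≠ ι j) {c : ℂ}
    (hc : c ≠ 0) :
    rootMultiplicity c⁻¹ (fold 2 (-1) σ ι f j) = wtAt f c (ι j) + wtAt f (-c) (σ (ι j)) := by
  rw [rootMultiplicity_fold _ _ _ _ _ _ (inv_ne_zero hc), inv_inv]
  simp only [Finset.sum_range_succ, Finset.sum_range_zero, zero_add, pow_zero, pow_one, one_mul,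
    neg_one_mul, lamComp, ne_eq, hj, and_false, if_false, Equiv.Perm.coe_one, id_eq,
    neg_eq_iff_eq_neg, Finset.sum_add_distrib, sum_ite_eq_wtAt hf]

theorem rootMultiplicity_fold_of_eq (hf : ∀ i, (f i).coeff 0 = 1) (hj : σ (ι j) = ι j) {c : ℂ}
    (hc : c ≠ 0) :
    rootMultiplicity (c ^ 2)⁻¹ (fold 2 (-1) σ ι f j) = wtAt f c (ι j) + wtAt f (-c) (ι j) := by
  have hsplit : ∀ b, (if b = c ∨ b = -c then wtAt f b (ι j) else 0) =
      (if b = c then wtAt f b (ι j) else 0) + (if b = -c then wtAt f b (ι j) else 0) := by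
    intro b
    rcases eq_or_ne b c with rfl | hbc
    · simp [self_eq_neg, hc]
    · simp [hbc]
  rw [rootMultiplicity_fold _ _ _ _ _ _ (inv_ne_zero (pow_ne_zero 2 hc)), inv_inv]
  simp only [Finset.sum_range_succ, Finset.sum_range_zero, zero_add, pow_zero, one_mul, hj,
    sq_eq_sq_iff_eq_or_eq_neg, lamComp, ne_eq, and_true, one_ne_zero, not_true_eq_false,
    not_false_eq_true, if_true, if_false, ite_self, add_zero, Equiv.Perm.coe_one, id_eq, hsplit,
    Finset.sum_add_distrib, sum_ite_eq_wtAt hf]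

theorem fold_eq_fold_iff (hσ : Function.Involutive σ) (horb : ∀ i, ∃ j, i = ι j ∨ i = σ (ι j))
    (hf : ∀ i, (f i).coeff 0 = 1) (hg : ∀ i, (g i).coeff 0 = 1) :
    fold 2 (-1) σ ι f = fold 2 (-1) σ ι g ↔ ∀ c ≠ 0, ∀ i, foldedWt σ f c i = foldedWt σ g c i := by
  constructor
  · intro h c hc i
    obtain ⟨j, hij⟩ := horb i
    have hfold := congrFun h j
    by_cases hj : σ (ι j) = ι j
    · obtain rfl : i = ι j := hij.elim id (·.trans hj)
      have := congrArg (rootMultiplicity (c ^ 2)⁻¹) hfold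
      rw [foldedWt, foldedWt, hj]
      rwa [rootMultiplicity_fold_of_eq σ ι hf hj hc,
        rootMultiplicity_fold_of_eq σ ι hg hj hc] at this
    rcases hij with rfl | rfl
    · have := congrArg (rootMultiplicity c⁻¹) hfold
      rwa [rootMultiplicity_fold_of_ne σ ι hf hj hc,
        rootMultiplicity_fold_of_ne σ ι hg hj hc] at this
    · have := congrArg (rootMultiplicity (-c)⁻¹) hfold
      rw [foldedWt, foldedWt, hσ (ι j)]
      rwa [rootMultiplicity_fold_of_ne σ ι hf hj (neg_ne_zero.2 hc),
        rootMultiplicity_fold_of_ne σ ι hg hj (neg_ne_zero.2 hc), neg_neg, add_comm,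
        add_comm (wtAt g _ _)] at this
  · intro h
    funext j
    refine eq_of_rootMultiplicity_eq_of_coeff_zero_eq_one (coeff_zero_fold _ _ _ _ _ _)
      (coeff_zero_fold _ _ _ _ _ _) fun x hx => ?_
    by_cases hj : σ (ι j) = ι j
    · obtain ⟨c, hcx⟩ := IsAlgClosed.exists_pow_nat_eq x⁻¹ two_pos
      have hc : c ≠ 0 := by rintro rfl; simp at hcx; exact hx hcx.symm
      rw [← inv_inv x, ← hcx, rootMultiplicity_fold_of_eq σ ι hf hj hc,
        rootMultiplicity_fold_of_eq σ ι hg hj hc]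
      simpa [foldedWt, hj] using h c hc (ι j)
    · rw [← inv_inv x, rootMultiplicity_fold_of_ne σ ι hf hj (inv_ne_zero hx),
        rootMultiplicity_fold_of_ne σ ι hg hj (inv_ne_zero hx)]
      exact h _ (inv_ne_zero hx) (ι j)

theorem fold_eq_fold_piLam_mul_piLam_iff (hσ : Function.Involutive σ)
    (horb : ∀ i, ∃ j, i = ι j ∨ i = σ (ι j)) {a : ℂ} (ha : a ≠ 0) (lam mu : I → ℕ)
    (hf : ∀ i, (f i).coeff 0 = 1) :
    fold 2 (-1) σ ι f = fold 2 (-1) σ ι (piLam lam a * piLam mu (-a)) ↔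
      ∃ n m : I → ℕ, f = piLam n a * piLam m (-a) ∧ ∀ i, n i + m (σ i) = lam i + mu (σ i) := by
  have ha' : a ≠ -a := fun h => ha (self_eq_neg.1 h)
  rw [fold_eq_fold_iff σ ι hσ horb hf (coeff_zero_piLam_mul_piLam _ _ _ _)]
  constructor
  · intro h
    have hsupp : ∀ c ≠ 0, c ≠ a → c ≠ -a → ∀ i, wtAt f c i = 0 := fun c hc hca hcna i => by
      have := h c hc i
      rw [foldedWt_piLam_mul_piLam σ _ _ ha hc, if_neg hca, if_neg hcna, foldedWt] at this
      omega
    refine ⟨_, _, eq_piLam_mul_piLam_of_wtAt_eq_zero hf ha' hsupp, fun i => ?_⟩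
    have := h a ha i
    rwa [foldedWt_piLam_mul_piLam σ _ _ ha ha, if_pos rfl, if_neg ha', add_zero] at this
  · rintro ⟨n, m, rfl, hnm⟩ c hc i
    rw [foldedWt_piLam_mul_piLam σ _ _ ha hc, foldedWt_piLam_mul_piLam σ _ _ ha hc]
    have := hnm (σ i)
    rw [hσ i] at this
    rw [hnm i, add_comm (m i), this, add_comm (mu i)]

end Fold

theorem stmt19_general {I I₀ : Type*} [Fintype I]
    (σ : Equiv.Perm I) (hσ : σ * σ = 1)
    (ι : I₀ → I)
    (horb : ∀ i : I, ∃ j : I₀, i = ι j ∨ i = σ (ι j))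
    (a : ℂ) (ha : a ≠ 0) (lam mu : I → ℕ) :
    ∀ f : I → Polynomial ℂ, (∀ i, (f i).coeff 0 = 1) →
      (fold 2 (-1 : ℂ) σ ι f = fold 2 (-1 : ℂ) σ ι (piLam lam a * piLam mu (-a)) ↔
        ∃ η : I → ℤ,
          (∀ i, 0 ≤ (lam i : ℤ) + η i) ∧
          (∀ i, η i ≤ sw σ (fun i' => (mu i' : ℤ)) i) ∧
          f = piLamZ (fun i => (lam i : ℤ) + η i) a *
              piLamZ (fun i => (mu i : ℤ) - sw σ η i) (-a)) := by
  intro f hf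
  have hinv : Function.Involutive σ := fun i => congrArg (· i) hσ
  have hsw : ∀ v : I → ℤ, sw σ v = fun i => v (σ i) := fun v =>
    funext fun i => congrArg v (σ.symm_apply_eq.2 (hinv i).symm)
  rw [fold_eq_fold_piLam_mul_piLam_iff σ ι hinv horb ha lam mu hf]
  simp only [hsw, piLamZ_eq_piLam]
  constructor
  · rintro ⟨n, m, rfl, hnm⟩
    refine ⟨fun i => n i - lam i, fun i => ?_, fun i => ?_, ?_⟩ <;> beta_reduce
    · omega
    · have := hnm i
      omega
    congr <;> funext i
    · omega
    · have := hnm (σ i)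
      rw [hinv i] at this
      omega
  · rintro ⟨η, hlo, hhi, rfl⟩
    refine ⟨_, _, rfl, fun i => ?_⟩
    have := hhi i
    have := hlo i
    rw [hinv i]
    omega

/-- let m = 2 and 𝛑 = 𝛑_{λ,a} 𝛑_{μ,-a} ∈ 𝒫 with λ, μ ∈ P⁺.  Then
𝐫⁻¹(𝐫(𝛑)) = { 𝛑_{λ+η,a} 𝛑_{μ-σ(η),-a} : η ∈ (P⁺ - λ) ∩ (P⁻ + σ(μ)) }. -/
theorem stmt19 {I I₀ : Type*} [Fintype I]
    (σ : Equiv.Perm I) (hσ : σ * σ = 1)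
    (ι : I₀ → I) (hinj : Function.Injective ι)
    (horb : ∀ i : I, ∃ j : I₀, i = ι j ∨ i = σ (ι j))
    (hsep : ∀ j j' : I₀, σ (ι j) = ι j' → ι j = ι j')
    (a : ℂ) (ha : a ≠ 0) (lam mu : I → ℕ) :
    ∀ f : I → Polynomial ℂ, (∀ i, (f i).coeff 0 = 1) →
      (fold 2 (-1 : ℂ) σ ι f = fold 2 (-1 : ℂ) σ ι (piLam lam a * piLam mu (-a)) ↔
        ∃ η : I → ℤ,
          (∀ i, 0 ≤ (lam i : ℤ) + η i) ∧
          (∀ i, η i ≤ sw σ (fun i' => (mu i' : ℤ)) i) ∧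
          f = piLamZ (fun i => (lam i : ℤ) + η i) a *
              piLamZ (fun i => (mu i : ℤ) - sw σ η i) (-a)) :=
  stmt19_general σ hσ ι horb a ha lam mu

end
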